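/- For the majority function MAJ_3 on 3 bits and any p ∈ [0,1], the distributional local witness complexity satisfies ℓ(MAJ_3, π_p) = 2 + 2p(1−p). -/

import Mathlib

open Classical

noncomputable section

/-- Flip the bits of `x` in the set `B`. -/
def flipOn {ι : Type*} [DecidableEq ι] (x : ι → Bool) (B : Finset ι) : ι → Bool :=
  fun i => if i ∈ B then !(x i) else x i

/-- Pointwise sensitivity of `f` at `x`. -/
def sensAt {ι : Type*} [Fintype ι] [DecidableEq ι] (f : (ι → Bool) → Bool)
    (x : ι → Bool) : ℕ :=
  (Finset.univ.filter fun i => f (flipOn x {i}) ≠ f x).card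

/-- Pointwise block sensitivity of `f` at `x`. -/
def bsAt {ι : Type*} [DecidableEq ι] (f : (ι → Bool) → Bool) (x : ι → Bool) : ℕ :=
  sSup {m | ∃ B : Fin m → Finset ι,
    (∀ j, f (flipOn x (B j)) ≠ f x) ∧ ∀ j k, j ≠ k → Disjoint (B j) (B k)}

/-- `W` is a witness set for `f` at `x`. -/
def IsWitness {ι : Type*} (f : (ι → Bool) → Bool) (x : ι → Bool) (W : Finset ι) : Prop :=
  ∀ y, (∀ i ∈ W, y i = x i) → f y = f x

/-- Pointwise minimum witness size of `f` at `x`. -/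
def witAt {ι : Type*} (f : (ι → Bool) → Bool) (x : ι → Bool) : ℕ :=
  sInf {k | ∃ W : Finset ι, W.card = k ∧ IsWitness f x W}

/-- Decision trees querying coordinates in `ι`. -/
inductive DTree (ι : Type*) where
  | leaf : DTree ι
  | node : ι → DTree ι → DTree ι → DTree ι

/-- The set of coordinates queried by the tree `T` on input `x`. -/
def DTree.path {ι : Type*} [DecidableEq ι] : DTree ι → (ι → Bool) → Finset ι
  | .leaf, _ => ∅
  | .node i t0 t1, x => insert i (if x i then t1.path x else t0.path x)

/-- The tree `T` determines `f`: at each leaf the queried bits witness the value of `f`. -/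
def DTree.Determines {ι : Type*} [DecidableEq ι] (T : DTree ι)
    (f : (ι → Bool) → Bool) : Prop :=
  ∀ x, IsWitness f x (T.path x)

/-- A partition of the hypercube into subcubes, encoded by the map sending each point to
the code (fixed coordinates) of its part. -/
structure SubcubePartition (ι : Type*) where
  code : (ι → Bool) → (ι → Option Bool)
  self_mem : ∀ x i b, code x i = some b → x i = b
  compat : ∀ x y, (∀ i b, code x i = some b → y i = b) → code y = code x

/-- Number of coordinates fixed by the subcube containing `x`. -/
def SubcubePartition.codim {ι : Type*} [Fintype ι] (P : SubcubePartition ι)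
    (x : ι → Bool) : ℕ :=
  (Finset.univ.filter fun i => (P.code x i).isSome).card

/-- The partition determines `f`, i.e. `f` is constant on each part. -/
def SubcubePartition.Determines {ι : Type*} (P : SubcubePartition ι)
    (f : (ι → Bool) → Bool) : Prop :=
  ∀ x y, (∀ i b, P.code x i = some b → y i = b) → f y = f x

/-- Deterministic sensitivity. -/
def detSens {ι : Type*} [Fintype ι] [DecidableEq ι] (f : (ι → Bool) → Bool) : ℕ :=
  Finset.univ.sup fun x => sensAt f x

/-- Deterministic block sensitivity. -/
def detBS {ι : Type*} [Fintype ι] [DecidableEq ι] (f : (ι → Bool) → Bool) : ℕ :=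
  Finset.univ.sup fun x => bsAt f x

/-- Deterministic witness complexity. -/
def detWit {ι : Type*} [Fintype ι] [DecidableEq ι] (f : (ι → Bool) → Bool) : ℕ :=
  Finset.univ.sup fun x => witAt f x

/-- Deterministic subcube partition complexity. -/
def detSC {ι : Type*} [Fintype ι] (f : (ι → Bool) → Bool) : ℕ :=
  sInf {k | ∃ P : SubcubePartition ι, P.Determines f ∧ ∀ x, P.codim x ≤ k}

/-- Deterministic algorithmic (decision tree) complexity. -/
def detAlg {ι : Type*} [Fintype ι] [DecidableEq ι] (f : (ι → Bool) → Bool) : ℕ :=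
  sInf {k | ∃ T : DTree ι, T.Determines f ∧ ∀ x, (T.path x).card ≤ k}

/-- Weight of the configuration `x` under the product Bernoulli(p) measure `π_p`. -/
def wt {ι : Type*} [Fintype ι] (p : ℝ) (x : ι → Bool) : ℝ :=
  ∏ i, (if x i then p else 1 - p)

/-- Expectation under `π_p`. -/
def expec {ι : Type*} [Fintype ι] [DecidableEq ι] (p : ℝ) (g : (ι → Bool) → ℝ) : ℝ :=
  ∑ x, wt p x * g x

/-- Distributional sensitivity. -/
def distSens {ι : Type*} [Fintype ι] [DecidableEq ι] (f : (ι → Bool) → Bool) (p : ℝ) : ℝ :=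
  expec p fun x => (sensAt f x : ℝ)

/-- Distributional block sensitivity. -/
def distBS {ι : Type*} [Fintype ι] [DecidableEq ι] (f : (ι → Bool) → Bool) (p : ℝ) : ℝ :=
  expec p fun x => (bsAt f x : ℝ)

/-- Distributional witness complexity. -/
def distWit {ι : Type*} [Fintype ι] [DecidableEq ι] (f : (ι → Bool) → Bool) (p : ℝ) : ℝ :=
  expec p fun x => (witAt f x : ℝ)

/-- Distributional subcube partition complexity. -/
def distSC {ι : Type*} [Fintype ι] [DecidableEq ι] (f : (ι → Bool) → Bool) (p : ℝ) : ℝ :=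
  sInf {c | ∃ P : SubcubePartition ι, P.Determines f ∧
    c = expec p fun x => (P.codim x : ℝ)}

/-- Distributional algorithmic complexity. -/
def distAlg {ι : Type*} [Fintype ι] [DecidableEq ι] (f : (ι → Bool) → Bool) (p : ℝ) : ℝ :=
  sInf {c | ∃ T : DTree ι, T.Determines f ∧
    c = expec p fun x => ((T.path x).card : ℝ)}

/-- `μ x J` is the joint probability that the bits equal `x` and the random set equals `J`;
the conditions say: the marginal of the bits is `π_p`, the random set is a.s. a witness set
for `f`, and the random set is local (conditionally on `{I = J}` and the bits on `J`, the
bits outside `J` are still i.i.d. Bernoulli(p)). -/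
def IsLocalWitnessSystem {ι : Type*} [Fintype ι] [DecidableEq ι]
    (f : (ι → Bool) → Bool) (p : ℝ) (μ : (ι → Bool) → Finset ι → ℝ) : Prop :=
  (∀ x J, 0 ≤ μ x J) ∧
  (∀ x, ∑ J, μ x J = wt p x) ∧
  (∀ x J, μ x J ≠ 0 → IsWitness f x J) ∧
  (∀ (J : Finset ι) x y, (∀ i ∈ J, x i = y i) → μ x J * wt p y = μ y J * wt p x)

/-- Distributional local witness complexity. -/
def distLocal {ι : Type*} [Fintype ι] [DecidableEq ι]
    (f : (ι → Bool) → Bool) (p : ℝ) : ℝ :=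
  sInf {c | ∃ μ : (ι → Bool) → Finset ι → ℝ, IsLocalWitnessSystem f p μ ∧
    c = ∑ x, ∑ J, μ x J * (J.card : ℝ)}

/-- The majority function on 3 bits. -/
def MAJ3 : (Fin 3 → Bool) → Bool := fun x => (x 0 && x 1) || (x 0 && x 2) || (x 1 && x 2)

/-!
The decision tree that reads `x 0` and `x 1`, and reads `x 2` only when they disagree, reads a
witness set, and the set it reads is local (whether a bit gets read depends only on bits read
before it). Its expected size is `2 + P(x 0 ≠ x 1) = 2 + 2p(1-p)`.

Conversely, a witness set of `MAJ3` is either all three bits or a pair `J` on which `x` is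
constant, so `E|I| = 3 - P(I is a pair)`. By locality, on the cylinder `{x | x ≡ b on J}` the
mass of `{I = J}` is proportional to `π_p`; the three pairs all compete for the configuration
`(b, b, b)`, of weight `w_b ^ 3` (`w_true = p`, `w_false = 1 - p`), so the total pair mass on
these cylinders is at most `w_b ^ 2`. Hence `P(I is a pair) ≤ p ^ 2 + (1 - p) ^ 2 = 1 - 2p(1-p)`.
-/

open Finset

section BooleanCube

variable {ι : Type*} [Fintype ι]

def cylinder [DecidableEq ι] (J : Finset ι) (y : ι → Bool) : Finset (ι → Bool) :=
  {x | ∀ i ∈ J, x i = y i}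

theorem mem_cylinder [DecidableEq ι] {J : Finset ι} {x y : ι → Bool} :
    x ∈ cylinder J y ↔ ∀ i ∈ J, x i = y i := by
  simp [cylinder]

theorem sum_wt_cylinder [DecidableEq ι] (p : ℝ) (J : Finset ι) (y : ι → Bool) :
    ∑ x ∈ cylinder J y, wt p x = ∏ i ∈ J, (if y i then p else 1 - p) := by
  have hfiber : cylinder J y = Fintype.piFinset fun i => if i ∈ J then {y i} else univ := by
    ext x
    simp only [mem_cylinder, Fintype.mem_piFinset]
    refine forall_congr' fun i => ?_
    split_ifs with hi <;> simp [hi]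
  rw [hfiber]
  unfold wt
  rw [← prod_univ_sum (fun i => if i ∈ J then {y i} else univ)
    fun _ b => if b then p else 1 - p, ← prod_ite_mem_eq J]
  refine prod_congr rfl fun i _ => ?_
  by_cases hi : i ∈ J <;> simp [hi]

theorem sum_wt [DecidableEq ι] (p : ℝ) : ∑ x : ι → Bool, wt p x = 1 := by
  simpa [cylinder] using sum_wt_cylinder p (∅ : Finset ι) (fun _ => true)

theorem sum_eq_sum_cylinder_true_add_false [DecidableEq ι]
    {M : Type*} [AddCommMonoid M] {J : Finset ι} (hJ : J.Nonempty) {g : (ι → Bool) → M}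
    (hg : ∀ x, g x ≠ 0 → ∃ b, ∀ i ∈ J, x i = b) :
    ∑ x, g x =
      ∑ x ∈ cylinder J (fun _ => true), g x + ∑ x ∈ cylinder J (fun _ => false), g x := by
  rw [cylinder, cylinder, sum_filter, sum_filter, ← sum_add_distrib]
  refine sum_congr rfl fun x _ => ?_
  by_cases h0 : g x = 0
  · simp [h0]
  obtain ⟨j, hj⟩ := hJ
  obtain ⟨b, hb⟩ := hg x h0
  cases b
  · have : ¬∀ i ∈ J, x i = true := fun h => by simpa [hb j hj] using h j hj
    rw [if_neg this, if_pos hb, zero_add]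
  · have : ¬∀ i ∈ J, x i = false := fun h => by simpa [hb j hj] using h j hj
    rw [if_pos hb, if_neg this, add_zero]

theorem wt_nonneg {p : ℝ} (hp0 : 0 ≤ p) (hp1 : p ≤ 1) (x : ι → Bool) : 0 ≤ wt p x :=
  prod_nonneg fun i _ => by split <;> linarith

theorem wt_pos {p : ℝ} (hp0 : 0 < p) (hp1 : p < 1) (x : ι → Bool) : 0 < wt p x :=
  prod_pos fun i _ => by split <;> linarith

end BooleanCube

namespace DTree

variable {ι : Type*} [DecidableEq ι]

theorem path_eq_of_eqOn (T : DTree ι) {x y : ι → Bool} (h : ∀ i ∈ T.path x, y i = x i) :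
    T.path y = T.path x := by
  induction T with
  | leaf => rfl
  | node i t0 t1 ih0 ih1 =>
    simp only [path, forall_mem_insert] at h ⊢
    obtain ⟨hi, hrest⟩ := h
    cases hx : x i <;> simp only [hx, hi, Bool.false_eq_true, if_false, if_true] at hrest ⊢
    · rw [ih0 hrest]
    · rw [ih1 hrest]

variable [Fintype ι]

def pathSystem (T : DTree ι) (p : ℝ) (x : ι → Bool) (J : Finset ι) : ℝ :=
  if J = T.path x then wt p x else 0

theorem Determines.isLocalWitnessSystem_pathSystem {T : DTree ι} {f : (ι → Bool) → Bool}
    (hT : T.Determines f) {p : ℝ} (hp0 : 0 ≤ p) (hp1 : p ≤ 1) :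
    IsLocalWitnessSystem f p (T.pathSystem p) := by
  refine ⟨fun x J => ?_, fun x => ?_, fun x J hJ => ?_, fun J x y hxy => ?_⟩
  · unfold pathSystem; split_ifs <;> simp [wt_nonneg hp0 hp1]
  · simp [pathSystem]
  · unfold pathSystem at hJ; split_ifs at hJ with h
    · exact h ▸ hT x
    · exact absurd rfl hJ
  · have hpath {a b : ι → Bool} (hab : ∀ i ∈ J, a i = b i) (ha : J = T.path a) :
        J = T.path b :=
      ha.trans (T.path_eq_of_eqOn fun i hi => (hab i (ha ▸ hi)).symm).symm
    unfold pathSystem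
    by_cases hx : J = T.path x
    · simp only [if_pos hx, if_pos (hpath hxy hx), mul_comm]
    · have hy : ¬J = T.path y := fun hy => hx (hpath (fun i hi => (hxy i hi).symm) hy)
      simp only [if_neg hx, if_neg hy, zero_mul]

theorem sum_sum_pathSystem_mul_card (T : DTree ι) (p : ℝ) :
    ∑ x, ∑ J, T.pathSystem p x J * (J.card : ℝ) =
      expec p fun x => ((T.path x).card : ℝ) := by
  simp [pathSystem, expec]

end DTree

section LocalWitness

variable {ι : Type*} [Fintype ι] [DecidableEq ι] {f : (ι → Bool) → Bool} {p : ℝ}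

theorem le_distLocal {c : ℝ} (hne : ∃ μ, IsLocalWitnessSystem f p μ)
    (h : ∀ μ, IsLocalWitnessSystem f p μ → c ≤ ∑ x, ∑ J, μ x J * (J.card : ℝ)) :
    c ≤ distLocal f p := by
  obtain ⟨μ, hμ⟩ := hne
  exact le_csInf ⟨_, μ, hμ, rfl⟩ fun _ ⟨μ, hμ, hc⟩ => hc ▸ h μ hμ

theorem DTree.Determines.distLocal_le {T : DTree ι} (hT : T.Determines f) (hp0 : 0 ≤ p)
    (hp1 : p ≤ 1) : distLocal f p ≤ expec p fun x => ((T.path x).card : ℝ) := by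
  refine csInf_le ⟨0, ?_⟩ ⟨_, hT.isLocalWitnessSystem_pathSystem hp0 hp1,
    (T.sum_sum_pathSystem_mul_card p).symm⟩
  rintro _ ⟨μ, hμ, rfl⟩
  exact sum_nonneg fun x _ => sum_nonneg fun J _ => mul_nonneg (hμ.1 x J) J.card.cast_nonneg

namespace IsLocalWitnessSystem

variable {μ : (ι → Bool) → Finset ι → ℝ}

theorem sum_sum_eq_one (hμ : IsLocalWitnessSystem f p μ) : ∑ x, ∑ J, μ x J = 1 := by
  simp only [hμ.2.1, sum_wt]

theorem sum_sum_mul_le_of_isWitness (hμ : IsLocalWitnessSystem f p μ) (g : Finset ι → ℝ)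
    (hg : ∀ x J, IsWitness f x J → g J ≤ J.card) :
    ∑ x, ∑ J, μ x J * g J ≤ ∑ x, ∑ J, μ x J * (J.card : ℝ) := by
  refine sum_le_sum fun x _ => sum_le_sum fun J _ => ?_
  by_cases h0 : μ x J = 0
  · simp [h0]
  · exact mul_le_mul_of_nonneg_left (hg x J (hμ.2.2.1 x J h0)) (hμ.1 x J)

theorem sum_cylinder_mul_wt (hμ : IsLocalWitnessSystem f p μ) (J : Finset ι) (y : ι → Bool) :
    (∑ x ∈ cylinder J y, μ x J) * wt p y =
      μ y J * ∏ i ∈ J, (if y i then p else 1 - p) := by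
  rw [← sum_wt_cylinder, mul_sum, sum_mul]
  exact sum_congr rfl fun x hx => hμ.2.2.2 J x y (mem_cylinder.1 hx)

theorem sum_sum_cylinder_le (hμ : IsLocalWitnessSystem f p μ) {y : ι → Bool} (hy : 0 < wt p y)
    (𝒥 : Finset (Finset ι)) {c : ℝ} (hc0 : 0 ≤ c)
    (hc : ∀ J ∈ 𝒥, ∏ i ∈ J, (if y i then p else 1 - p) ≤ c) :
    ∑ J ∈ 𝒥, ∑ x ∈ cylinder J y, μ x J ≤ c := by
  refine le_of_mul_le_mul_right ?_ hy
  calc (∑ J ∈ 𝒥, ∑ x ∈ cylinder J y, μ x J) * wt p y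
      = ∑ J ∈ 𝒥, μ y J * ∏ i ∈ J, (if y i then p else 1 - p) := by
        simp only [sum_mul, hμ.sum_cylinder_mul_wt]
    _ ≤ ∑ J ∈ 𝒥, μ y J * c :=
        sum_le_sum fun J hJ => mul_le_mul_of_nonneg_left (hc J hJ) (hμ.1 y J)
    _ ≤ ∑ J, μ y J * c :=
        sum_le_univ_sum_of_nonneg fun J => mul_nonneg (hμ.1 y J) hc0
    _ = c * wt p y := by rw [← sum_mul, hμ.2.1, mul_comm]

end IsLocalWitnessSystem

end LocalWitness

theorem Fin.sum_univ_fun_three {M α : Type*} [AddCommMonoid M] [Fintype α]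
    (g : (Fin 3 → α) → M) : ∑ x, g x = ∑ a, ∑ b, ∑ c, g ![a, b, c] := by
  simp only [← (Fin.consEquiv fun _ => α).sum_comp, Fintype.sum_prod_type, Fintype.sum_unique]
  rfl

def maj3Tree : DTree (Fin 3) :=
  .node 0 (.node 1 .leaf (.node 2 .leaf .leaf)) (.node 1 (.node 2 .leaf .leaf) .leaf)

theorem maj3Tree_determines : maj3Tree.Determines MAJ3 := by
  unfold DTree.Determines IsWitness; decide

theorem expec_card_path_maj3Tree (p : ℝ) :
    (expec p fun x => ((maj3Tree.path x).card : ℝ)) = 2 + 2 * p * (1 - p) := by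
  have hcard (x : Fin 3 → Bool) : (maj3Tree.path x).card = if x 0 = x 1 then 2 else 3 := by
    revert x; decide
  simp [expec, hcard, Fin.sum_univ_fun_three, wt, Fin.prod_univ_three]
  ring

theorem eq_univ_or_card_eq_two_of_isWitness_MAJ3 {x : Fin 3 → Bool} {J : Finset (Fin 3)}
    (h : IsWitness MAJ3 x J) :
    J = univ ∨ J.card = 2 ∧ ∃ b, ∀ i ∈ J, x i = b := by
  revert x J; unfold IsWitness; decide

namespace IsLocalWitnessSystem

variable {p : ℝ} {μ : (Fin 3 → Bool) → Finset (Fin 3) → ℝ}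

theorem three_sub_sum_pairs_le_cost_MAJ3 (hμ : IsLocalWitnessSystem MAJ3 p μ) :
    3 - ∑ J ∈ powersetCard 2 univ, ∑ x, μ x J ≤ ∑ x, ∑ J, μ x J * (J.card : ℝ) := by
  calc 3 - ∑ J ∈ powersetCard 2 univ, ∑ x, μ x J
      = ∑ x, ∑ J, μ x J * (3 - if J ∈ powersetCard 2 univ then 1 else 0) := by
        simp only [mul_sub, mul_ite, mul_one, mul_zero, sum_sub_distrib, ← sum_mul,
          hμ.sum_sum_eq_one, ← sum_filter, sum_comm (γ := Finset (Fin 3))]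
        simp
    _ ≤ ∑ x, ∑ J, μ x J * (J.card : ℝ) := by
        refine hμ.sum_sum_mul_le_of_isWitness _ fun x J hJ => ?_
        rcases eq_univ_or_card_eq_two_of_isWitness_MAJ3 hJ with rfl | ⟨hcard, -⟩
        · simp
        · norm_num [hcard]

theorem sum_pairs_le_MAJ3 (hμ : IsLocalWitnessSystem MAJ3 p μ) (hp0 : 0 ≤ p) (hp1 : p ≤ 1) :
    ∑ J ∈ powersetCard 2 univ, ∑ x, μ x J ≤ p ^ 2 + (1 - p) ^ 2 := by
  have htotal : ∑ J ∈ powersetCard 2 univ, ∑ x, μ x J ≤ 1 :=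
    calc ∑ J ∈ powersetCard 2 univ, ∑ x, μ x J
        ≤ ∑ J, ∑ x, μ x J :=
          sum_le_univ_sum_of_nonneg fun J => sum_nonneg fun x _ => hμ.1 x J
      _ = 1 := by rw [sum_comm]; exact hμ.sum_sum_eq_one
  rcases hp0.eq_or_lt with rfl | hp0'
  · simpa using htotal
  rcases hp1.eq_or_lt with rfl | hp1'
  · simpa using htotal
  have hfiber (b : Bool) :
      ∑ J ∈ powersetCard 2 univ, ∑ x ∈ cylinder J (fun _ => b), μ x J ≤
        (if b then p else 1 - p) ^ 2 := by
    refine hμ.sum_sum_cylinder_le (y := fun _ => b) (wt_pos hp0' hp1' _) _ (sq_nonneg _)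
      fun J hJ => ?_
    rw [prod_const, (mem_powersetCard.1 hJ).2]
  have hsplit (J : Finset (Fin 3)) (hJ : J ∈ powersetCard 2 univ) :
      ∑ x, μ x J = ∑ x ∈ cylinder J (fun _ => true), μ x J +
        ∑ x ∈ cylinder J (fun _ => false), μ x J := by
    have hcard : J.card = 2 := (mem_powersetCard.1 hJ).2
    refine sum_eq_sum_cylinder_true_add_false (card_pos.1 (by omega : 0 < J.card)) fun x hx => ?_
    refine ((eq_univ_or_card_eq_two_of_isWitness_MAJ3 (hμ.2.2.1 x J hx)).resolve_left ?_).2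
    rintro rfl
    simp at hcard
  calc ∑ J ∈ powersetCard 2 univ, ∑ x, μ x J
      = ∑ J ∈ powersetCard 2 univ, ∑ x ∈ cylinder J (fun _ => true), μ x J +
          ∑ J ∈ powersetCard 2 univ, ∑ x ∈ cylinder J (fun _ => false), μ x J := by
        rw [← sum_add_distrib]; exact sum_congr rfl hsplit
    _ ≤ p ^ 2 + (1 - p) ^ 2 := by simpa using add_le_add (hfiber true) (hfiber false)

theorem le_cost_MAJ3 (hμ : IsLocalWitnessSystem MAJ3 p μ) (hp0 : 0 ≤ p) (hp1 : p ≤ 1) :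
    2 + 2 * p * (1 - p) ≤ ∑ x, ∑ J, μ x J * (J.card : ℝ) := by
  linarith [hμ.three_sub_sum_pairs_le_cost_MAJ3, hμ.sum_pairs_le_MAJ3 hp0 hp1]

end IsLocalWitnessSystem

/-- the distributional local witness complexity of `MAJ_3` is `2 + 2p(1-p)`. -/
theorem maj3_distLocal (p : ℝ) (hp0 : 0 ≤ p) (hp1 : p ≤ 1) :
    distLocal MAJ3 p = 2 + 2 * p * (1 - p) := by
  refine le_antisymm ?_ (le_distLocal ⟨_, maj3Tree_determines.isLocalWitnessSystem_pathSystem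
    hp0 hp1⟩ fun μ hμ => hμ.le_cost_MAJ3 hp0 hp1)
  calc distLocal MAJ3 p ≤ expec p fun x => ((maj3Tree.path x).card : ℝ) :=
        maj3Tree_determines.distLocal_le hp0 hp1
    _ = 2 + 2 * p * (1 - p) := expec_card_path_maj3Tree p
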